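/- arXiv:2004.02190 — 2 statements merged into one kernel-verified Lean document; each statement's English description precedes it below -/
import Mathlib

section
/- Let p be a prime, n, m ≥ 1, and let g ∈ GL_n(ZMod p^m) have order p^n − 1. Then the cyclic group generated by g acts freely on the nonzero elements of Q = (ZMod p^m)^n: for every integer k and every nonzero v ∈ (ZMod p^m)^n, if g^k • v = v then (p^n − 1) divides k (equivalently g^k = 1). -/
/-!
Reduce modulo `p`. The kernel of `GL_n(ℤ/p^m) → GL_n(𝔽_p)` consists of matrices `1 + pB`, whose
`p^(m-1)`-th powers are `1`; as `p^n - 1` is prime to `p`, the reduction `ḡ` of `g` is again a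
Singer cycle. Writing `v = p^e w` with `w ≢ 0 (mod p)`, the relation `g^k v = v` descends to
`ḡ^k w̄ = w̄`. Over `𝔽_p`, the algebra `𝔽_p[ḡ]` has at most `p^n` elements (Cayley–Hamilton) and
contains the `p^n - 1` distinct units `ḡ^i`, so all its nonzero elements are invertible; hence
`ḡ^k - 1`, which kills `w̄ ≠ 0`, vanishes, and `p^n - 1 = orderOf ḡ` divides `k`.
-/

open Matrix Polynomial
open scoped MatrixGroups

theorem one_add_natCast_mul_pow_eq_one {S : Type*} [Ring S] {p m : ℕ} (hpm : (p : S) ^ m = 0)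
    (B : S) : (1 + (p : S) * B) ^ p ^ (m - 1) = 1 := by
  rcases Nat.eq_zero_or_pos m with rfl | hm
  · have : Subsingleton S := subsingleton_of_zero_eq_one (by simpa using hpm.symm)
    exact Subsingleton.elim _ _
  -- `S` need not be commutative: prove `p^m ∣ (1 + pX)^(p^(m-1)) - 1` in `ℤ[X]`, then evaluate.
  obtain ⟨c, hc⟩ := dvd_sub_pow_of_dvd_sub (R := ℤ[X]) (p := p) (a := 1 + (p : ℤ[X]) * X)
    (b := 1) (by simp) (m - 1)
  have := congrArg (aeval B) hc
  simp only [map_sub, map_pow, map_add, map_one, map_mul, map_natCast, aeval_X, one_pow,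
    Nat.sub_add_cancel hm, hpm, zero_mul] at this
  exact sub_eq_zero.mp this

theorem exists_eq_pow_smul_and_forall_ne_smul {R M : Type*} [Semiring R] [AddCommMonoid M]
    [Module R M] {r : R} {m : ℕ} (hrm : r ^ m = 0) {v : M} (hv : v ≠ 0) :
    ∃ e < m, ∃ w : M, v = r ^ e • w ∧ ∀ y : M, w ≠ r • y := by
  classical
  let P e := ∃ w : M, v = r ^ e • w
  have hP0 : P 0 := ⟨v, by rw [pow_zero, one_smul]⟩
  have hPm : ¬ P m := fun ⟨w, hw⟩ => hv (by rw [hw, hrm, zero_smul])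
  have hspec : P (Nat.findGreatest P m) := Nat.findGreatest_spec (Nat.zero_le m) hP0
  have hlt : Nat.findGreatest P m < m :=
    lt_of_le_of_ne (Nat.findGreatest_le m) fun h => hPm (h ▸ hspec)
  obtain ⟨w, hw⟩ := hspec
  refine ⟨_, hlt, w, hw, fun y hy => ?_⟩
  refine Nat.findGreatest_is_greatest (Nat.lt_succ_self _) hlt ⟨y, ?_⟩
  rw [hw, hy, smul_smul, ← pow_succ]

theorem orderOf_map_eq_of_coprime {G H : Type*} [Monoid G] [Monoid H] (φ : G →* H) {q : ℕ}
    (hker : ∀ u, φ u = 1 → u ^ q = 1) {g : G} (hg : (orderOf g).Coprime q) :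
    orderOf (φ g) = orderOf g := by
  refine Nat.dvd_antisymm (orderOf_map_dvd φ g) (hg.dvd_of_dvd_mul_right ?_)
  refine orderOf_dvd_of_pow_eq_one ?_
  rw [pow_mul]
  exact hker _ (by rw [map_pow, pow_orderOf_eq_one])

theorem isUnit_of_ne_zero_of_natCard_le_orderOf_add_one {A : Type*} [Ring A] [Finite A] {x : A}
    (hx : Nat.card A ≤ orderOf x + 1) {a : A} (ha : a ≠ 0) : IsUnit a := by
  by_contra hau
  have : Nontrivial A := nontrivial_of_ne a 0 ha
  set U := Set.range ((↑) : Aˣ → A)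
  have hordx : orderOf x ≤ Nat.card Aˣ := by
    have : 0 < orderOf x := by have := Finite.one_lt_card (α := A); omega
    obtain ⟨u, rfl⟩ := (orderOf_pos_iff.mp this).isUnit
    rw [orderOf_units]
    exact Nat.le_of_dvd Nat.card_pos (orderOf_dvd_natCard _)
  have h0 : (0 : A) ∉ U := fun ⟨u, hu⟩ => u.ne_zero hu
  have ha' : a ∉ insert 0 U := by
    rintro (h | ⟨u, rfl⟩)
    exacts [ha h, hau u.isUnit]
  have := Set.ncard_le_ncard (Set.subset_univ (insert a (insert 0 U)))
  rw [Set.ncard_insert_of_notMem ha', Set.ncard_insert_of_notMem h0,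
    Set.ncard_range_of_injective Units.val_injective, Set.ncard_univ] at this
  omega

namespace ZMod

theorem exists_eq_natCast_mul_of_castHom_eq_zero {d N : ℕ} [NeZero N] (hd : d ∣ N)
    {x : ZMod N} (hx : castHom hd (ZMod d) x = 0) : ∃ y : ZMod N, x = d * y := by
  rw [castHom_apply, cast_eq_val, natCast_eq_zero_iff] at hx
  obtain ⟨c, hc⟩ := hx
  exact ⟨c, by rw [← natCast_zmod_val x, hc, Nat.cast_mul]⟩

theorem castHom_eq_zero_of_pow_mul_eq_zero {p m e : ℕ} (hp : p ≠ 0) (he : e < m)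
    {x : ZMod (p ^ m)} (hx : (p : ZMod (p ^ m)) ^ e * x = 0) :
    castHom (dvd_pow_self p (Nat.ne_zero_of_lt he)) (ZMod p) x = 0 := by
  have : NeZero (p ^ m) := ⟨pow_ne_zero m hp⟩
  rw [← natCast_zmod_val x, ← Nat.cast_pow, ← Nat.cast_mul, natCast_eq_zero_iff] at hx
  rw [castHom_apply, cast_eq_val, natCast_eq_zero_iff]
  have : p ^ e * p ^ (m - e) ∣ p ^ e * x.val := by rwa [← pow_add, Nat.add_sub_cancel' he.le]
  exact (dvd_pow_self p (by omega)).trans (Nat.dvd_of_mul_dvd_mul_left (by positivity) this)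

end ZMod

namespace Matrix

variable {ι : Type*} [Fintype ι]

theorem map_castHom_mulVec_eq_self_of_pow_smul {p m e : ℕ} (hp : p ≠ 0) (he : e < m)
    {M : Matrix ι ι (ZMod (p ^ m))} {w : ι → ZMod (p ^ m)}
    (hfix : M *ᵥ ((p : ZMod (p ^ m)) ^ e • w) = (p : ZMod (p ^ m)) ^ e • w) :
    M.map (ZMod.castHom (dvd_pow_self p (Nat.ne_zero_of_lt he)) (ZMod p)) *ᵥ
      (ZMod.castHom (dvd_pow_self p (Nat.ne_zero_of_lt he)) (ZMod p) ∘ w) =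
      ZMod.castHom (dvd_pow_self p (Nat.ne_zero_of_lt he)) (ZMod p) ∘ w := by
  funext i
  rw [← RingHom.map_mulVec, Function.comp_apply, ← sub_eq_zero, ← map_sub]
  refine ZMod.castHom_eq_zero_of_pow_mul_eq_zero hp he ?_
  have := congrFun hfix i
  rw [mulVec_smul, Pi.smul_apply, Pi.smul_apply, smul_eq_mul, smul_eq_mul] at this
  rw [mul_sub, this, sub_self]

variable [DecidableEq ι]

theorem natCard_adjoin_singleton_le {R : Type*} [CommRing R] [Nontrivial R] [Finite R]
    (M : Matrix ι ι R) : Nat.card (Algebra.adjoin R {M}) ≤ Nat.card R ^ Fintype.card ι := by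
  have hsurj : Function.Surjective fun q : degreeLT R (Fintype.card ι) =>
      (⟨aeval M (q : R[X]), Algebra.adjoin_singleton_eq_range_aeval R M ▸ ⟨q, rfl⟩⟩ :
        Algebra.adjoin R {M}) := by
    rintro ⟨_, hb⟩
    rw [Algebra.adjoin_singleton_eq_range_aeval] at hb
    obtain ⟨q, rfl⟩ := hb
    refine ⟨⟨q %ₘ M.charpoly, ?_⟩, Subtype.ext (M.aeval_eq_aeval_mod_charpoly q).symm⟩
    rw [mem_degreeLT, ← M.charpoly_degree_eq_dim]
    exact degree_modByMonic_lt q M.charpoly_monic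
  have : Finite (degreeLT R (Fintype.card ι)) := .of_equiv _ (degreeLTEquiv R _).toEquiv.symm
  calc Nat.card (Algebra.adjoin R {M}) ≤ Nat.card (degreeLT R (Fintype.card ι)) :=
        Nat.card_le_card_of_surjective _ hsurj
    _ = Nat.card R ^ Fintype.card ι := by
        rw [Nat.card_congr (degreeLTEquiv R _).toEquiv, Nat.card_fun, Nat.card_fin]

namespace GeneralLinearGroup

theorem pow_eq_one_of_map_castHom_eq_one {p m : ℕ} (hp : p ≠ 0) (hm : m ≠ 0)
    {u : GL ι (ZMod (p ^ m))}
    (hu : GeneralLinearGroup.map (ZMod.castHom (dvd_pow_self p hm) (ZMod p)) u = 1) :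
    u ^ p ^ (m - 1) = 1 := by
  have : NeZero (p ^ m) := ⟨pow_ne_zero m hp⟩
  have hred : (u - 1 : Matrix ι ι (ZMod (p ^ m))).map
      (ZMod.castHom (dvd_pow_self p hm) (ZMod p)) = 0 := by
    rw [← RingHom.mapMatrix_apply, map_sub, map_one, sub_eq_zero]
    exact congrArg Units.val hu
  choose B hB using fun i j => ZMod.exists_eq_natCast_mul_of_castHom_eq_zero
    (dvd_pow_self p hm) (congrFun₂ hred i j)
  have hpm : (p : Matrix ι ι (ZMod (p ^ m))) ^ m = 0 := by
    rw [← Nat.cast_pow, ← map_natCast (algebraMap (ZMod (p ^ m)) _), ZMod.natCast_self, map_zero]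
  have hu : (u : Matrix ι ι (ZMod (p ^ m))) = 1 + (p : Matrix ι ι (ZMod (p ^ m))) * of B := by
    rw [← sub_eq_iff_eq_add']
    ext i j
    rw [hB, ← diagonal_natCast, diagonal_mul, of_apply]
  ext1
  rw [Units.val_pow_eq_pow_val, hu, one_add_natCast_mul_pow_eq_one hpm, Units.val_one]

theorem zpow_eq_one_of_mulVec_eq_self {R : Type*} [CommRing R] [Nontrivial R] [Finite R]
    {h : GL ι R} (hh : orderOf h = Nat.card R ^ Fintype.card ι - 1) {k : ℤ} {w : ι → R}
    (hw : w ≠ 0) (hfix : (↑(h ^ k) : Matrix ι ι R) *ᵥ w = w) : h ^ k = 1 := by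
  set K := Algebra.adjoin R {(h : Matrix ι ι R)}
  have hhK : (h : Matrix ι ι R) ∈ K := Algebra.self_mem_adjoin_singleton R _
  obtain ⟨r, hr⟩ : ∃ r : ℕ, h ^ r = h ^ k :=
    (isOfFinOrder_of_finite h).mem_powers_iff_mem_zpowers.mpr ⟨k, rfl⟩
  rw [← hr] at hfix ⊢
  by_contra hk
  have hcard : Nat.card K ≤ orderOf (⟨h, hhK⟩ : K) + 1 := by
    have horder : orderOf (⟨h, hhK⟩ : K) = orderOf h := by
      rw [← orderOf_units, ← orderOf_injective K.val.toMonoidHom Subtype.val_injective]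
      rfl
    rw [horder, hh, Nat.sub_add_cancel (Nat.one_le_pow _ _ Nat.card_pos)]
    exact natCard_adjoin_singleton_le _
  have hsub_ne :
      (⟨(h : Matrix ι ι R) ^ r - 1, K.sub_mem (K.pow_mem hhK r) K.one_mem⟩ : K) ≠ 0 := by
    intro h0
    apply hk
    ext1
    simpa [sub_eq_zero] using congrArg Subtype.val h0
  obtain ⟨b, hb⟩ :=
    (isUnit_of_ne_zero_of_natCard_le_orderOf_add_one hcard hsub_ne).exists_left_inv
  apply hw
  calc w = ((b : Matrix ι ι R) * ((h : Matrix ι ι R) ^ r - 1)) *ᵥ w := by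
        rw [show (b : Matrix ι ι R) * _ = 1 from congrArg Subtype.val hb, one_mulVec]
    _ = 0 := by
        rw [← mulVec_mulVec, sub_mulVec, ← Units.val_pow_eq_pow_val, hfix, one_mulVec, sub_self,
          mulVec_zero]

end GeneralLinearGroup

end Matrix

theorem singer_cycle_free_homocyclic_general (p n m : ℕ) (hp : p.Prime) (hn : 1 ≤ n)
    (g : GL (Fin n) (ZMod (p ^ m))) (hg : orderOf g = p ^ n - 1)
    (k : ℤ) (v : Fin n → ZMod (p ^ m)) (hv : v ≠ 0)
    (hfix : ((g ^ k : GL (Fin n) (ZMod (p ^ m))) :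
        Matrix (Fin n) (Fin n) (ZMod (p ^ m))).mulVec v = v) :
    ((p ^ n - 1 : ℕ) : ℤ) ∣ k := by
  have : Fact p.Prime := ⟨hp⟩
  have hpm : (p : ZMod (p ^ m)) ^ m = 0 := by rw [← Nat.cast_pow, ZMod.natCast_self]
  obtain ⟨e, he, w, rfl, hw⟩ := exists_eq_pow_smul_and_forall_ne_smul hpm hv
  set f := ZMod.castHom (dvd_pow_self p (Nat.ne_zero_of_lt he)) (ZMod p)
  have hcop : (p ^ n - 1).Coprime p := by
    refine Nat.Coprime.coprime_dvd_right (dvd_pow_self p (by omega : n ≠ 0)) ?_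
    rw [Nat.coprime_self_sub_left (Nat.one_le_pow _ _ hp.pos)]
    exact Nat.coprime_one_left _
  have hord : orderOf (GeneralLinearGroup.map f g) = p ^ n - 1 := by
    rw [orderOf_map_eq_of_coprime _ (fun _ => GeneralLinearGroup.pow_eq_one_of_map_castHom_eq_one
      hp.ne_zero (Nat.ne_zero_of_lt he)) (hg ▸ hcop.pow_right (m - 1)), hg]
  have hw' : f ∘ w ≠ 0 := fun h0 => by
    have : NeZero (p ^ m) := ⟨pow_ne_zero m hp.ne_zero⟩
    choose y hy using fun i => ZMod.exists_eq_natCast_mul_of_castHom_eq_zero _ (congrFun h0 i)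
    exact hw y (funext hy)
  have hfix' : (↑(GeneralLinearGroup.map f g ^ k) : Matrix (Fin n) (Fin n) (ZMod p)) *ᵥ (f ∘ w)
      = f ∘ w := by
    rw [← map_zpow]
    exact map_castHom_mulVec_eq_self_of_pow_smul hp.ne_zero he hfix
  rw [← hord]
  refine orderOf_dvd_iff_zpow_eq_one.mpr
    (GeneralLinearGroup.zpow_eq_one_of_mulVec_eq_self ?_ hw' hfix')
  rw [hord, Nat.card_zmod, Fintype.card_fin]

/-- A Singer cycle `g` in `GL n (ZMod (p ^ m))` generates a cyclic group acting freely on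
the nonzero elements of `Q = (ZMod (p ^ m)) ^ n`: if `g ^ k` fixes a nonzero element then
`p ^ n - 1 ∣ k`, i.e. `g ^ k = 1`. -/
theorem singer_cycle_free_homocyclic (p n m : ℕ) (hp : p.Prime) (hn : 1 ≤ n) (hm : 1 ≤ m)
    (g : GL (Fin n) (ZMod (p ^ m))) (hg : orderOf g = p ^ n - 1)
    (k : ℤ) (v : Fin n → ZMod (p ^ m)) (hv : v ≠ 0)
    (hfix : ((g ^ k : GL (Fin n) (ZMod (p ^ m))) :
        Matrix (Fin n) (Fin n) (ZMod (p ^ m))).mulVec v = v) :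
    ((p ^ n - 1 : ℕ) : ℤ) ∣ k :=
  singer_cycle_free_homocyclic_general p n m hp hn g hg k v hv hfix
end

section
/- Let p be a prime and n, m ≥ 1. Let E be a subgroup of GL_n(ZMod p^m) whose order is not divisible by p and which contains an element of order p^n − 1, and let H be a nontrivial normal subgroup of E. Then H has no nonzero fixed points on Q = (ZMod p^m)^n: the only v ∈ (ZMod p^m)^n satisfying h • v = v for all h ∈ H is v = 0. -/
/-!
Reduce modulo `p`. The kernel of `GL_n(ℤ/p^m) → GL_n(𝔽_p)` consists of matrices `1 + pB`,
whose `p^m`-th powers are `1`, so reduction preserves the order of every element of the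
`p'`-group `E`: the image of `g` is a Singer cycle of `GL_n(𝔽_p)` and the image of `H` is
nontrivial. A nonzero fixed vector of `H` has a nonzero multiple in `p^(m-1) Q ≅ 𝔽_p^n`, which
gives a nonzero vector of `𝔽_p^n` fixed by the image of `H`. A Singer cycle `A` acts
transitively on the nonzero vectors of `𝔽_p^n`: the algebra `𝔽_p[A]` has at most `p^n`
elements, so it is `{0} ∪ ⟨A⟩`, and `r ↦ r w` is a bijection `𝔽_p[A] → 𝔽_p^n` for `w ≠ 0`.
Since `A` normalizes the image of `H`, that image fixes every vector, hence is trivial.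
-/

open Matrix Polynomial
open scoped MatrixGroups

theorem one_add_natCast_mul_pow_pow_eq_one {R : Type*} [Ring R] {p m : ℕ} (h : (p : R) ^ m = 0)
    (b : R) : (1 + p * b) ^ p ^ m = 1 := by
  -- `R` need not be commutative: compute in `ℤ[X]` and evaluate at `b`.
  obtain ⟨q, hq⟩ := dvd_sub_pow_of_dvd_sub (p := p) (a := 1 + (p : ℤ[X]) * X) (b := 1)
    (by simp) m
  have := congrArg (aeval b) hq
  simp only [map_sub, map_pow, map_add, map_one, map_mul, map_natCast, aeval_X, one_pow,
    pow_succ, h, zero_mul] at this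
  exact sub_eq_zero.mp this

namespace ZMod

theorem natCast_dvd_intCast_iff {d n : ℕ} (h : d ∣ n) (z : ℤ) :
    (d : ZMod n) ∣ (z : ZMod n) ↔ (d : ℤ) ∣ z := by
  refine ⟨fun ⟨y, hy⟩ => ?_, fun hz => by simpa using map_dvd (Int.castRingHom (ZMod n)) hz⟩
  obtain ⟨y, rfl⟩ := intCast_surjective y
  rw [← Int.cast_natCast, ← Int.cast_mul, intCast_eq_intCast_iff_dvd_sub] at hy
  simpa using dvd_sub (dvd_mul_right (d : ℤ) y) ((Int.natCast_dvd_natCast.mpr h).trans hy)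

theorem castHom_eq_zero_iff {d n : ℕ} (h : d ∣ n) (x : ZMod n) :
    castHom h (ZMod d) x = 0 ↔ (d : ZMod n) ∣ x := by
  obtain ⟨z, rfl⟩ := intCast_surjective x
  rw [map_intCast, intCast_zmod_eq_zero_iff_dvd, natCast_dvd_intCast_iff h]

theorem natCast_mul_eq_zero_iff_dvd {a b n : ℕ} (hab : a * b = n) (ha : a ≠ 0) (x : ZMod n) :
    (a : ZMod n) * x = 0 ↔ (b : ZMod n) ∣ x := by
  obtain ⟨z, rfl⟩ := intCast_surjective x
  rw [natCast_dvd_intCast_iff (Dvd.intro_left a hab), ← Int.cast_natCast, ← Int.cast_mul,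
    intCast_zmod_eq_zero_iff_dvd, ← hab, Nat.cast_mul,
    mul_dvd_mul_iff_left (by exact_mod_cast ha)]

variable {p m : ℕ}

theorem pow_pred_mul_eq_zero_iff (hp : p ≠ 0) (hm : m ≠ 0) (x : ZMod (p ^ m)) :
    (p : ZMod (p ^ m)) ^ (m - 1) * x = 0 ↔ castHom (dvd_pow_self p hm) (ZMod p) x = 0 := by
  rw [castHom_eq_zero_iff, ← Nat.cast_pow, natCast_mul_eq_zero_iff_dvd _ (pow_ne_zero _ hp)]
  rw [← pow_succ, Nat.sub_add_cancel (Nat.one_le_iff_ne_zero.mpr hm)]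

theorem pow_pred_dvd_of_mul_eq_zero (hp : p ≠ 0) (hm : m ≠ 0) {x : ZMod (p ^ m)}
    (hx : (p : ZMod (p ^ m)) * x = 0) : (p : ZMod (p ^ m)) ^ (m - 1) ∣ x := by
  rwa [← Nat.cast_pow, ← natCast_mul_eq_zero_iff_dvd _ hp]
  rw [← pow_succ', Nat.sub_add_cancel (Nat.one_le_iff_ne_zero.mpr hm)]

end ZMod

theorem Matrix.GeneralLinearGroup.pow_eq_one_of_map_castHom_eq_one_s13 {ι : Type*} [Fintype ι]
    [DecidableEq ι] {p m : ℕ} (hm : m ≠ 0) {u : GL ι (ZMod (p ^ m))}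
    (hu : map (ZMod.castHom (dvd_pow_self p hm) (ZMod p)) u = 1) : u ^ p ^ m = 1 := by
  have hdvd (i j : ι) : (p : ZMod (p ^ m)) ∣ (u - 1 : Matrix ι ι (ZMod (p ^ m))) i j := by
    rw [← ZMod.castHom_eq_zero_iff (dvd_pow_self p hm), sub_apply, map_sub,
      ← GeneralLinearGroup.map_apply, hu]
    rcases eq_or_ne i j with rfl | h <;> simp [*]
  choose B hB using hdvd
  have hu : (u : Matrix ι ι (ZMod (p ^ m))) = 1 + (p : Matrix ι ι (ZMod (p ^ m))) * of B := by
    rw [← nsmul_eq_mul, ← sub_eq_iff_eq_add']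
    ext i j
    rw [hB, smul_apply, of_apply, nsmul_eq_mul]
  have hp : (p : Matrix ι ι (ZMod (p ^ m))) ^ m = 0 := by
    rw [← Nat.cast_pow, ← map_natCast (Matrix.scalar ι), ZMod.natCast_self, map_zero]
  ext1
  rw [Units.val_pow_eq_pow_val, hu, one_add_natCast_mul_pow_pow_eq_one hp, Units.val_one]

theorem exists_pow_smul_ne_zero_and_smul_eq_zero {R M : Type*} [Monoid R] [Zero M]
    [MulAction R M] (a : R) {v : M} (hv : v ≠ 0) {k : ℕ} (hk : a ^ k • v = 0) :
    ∃ j, a ^ j • v ≠ 0 ∧ a • a ^ j • v = 0 := by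
  induction k with
  | zero => exact absurd (by simpa using hk) hv
  | succ k ih =>
    by_cases h : a ^ k • v = 0
    · exact ih h
    · exact ⟨k, h, by rwa [smul_smul, ← pow_succ']⟩

theorem exists_castHom_comp_ne_zero_and_map_mulVec_eq {ι : Type*} [Fintype ι] {p m : ℕ}
    (hp : p ≠ 0) (hm : m ≠ 0) {v : ι → ZMod (p ^ m)} (hv : v ≠ 0) :
    ∃ u : ι → ZMod (p ^ m), ZMod.castHom (dvd_pow_self p hm) (ZMod p) ∘ u ≠ 0 ∧
      ∀ M : Matrix ι ι (ZMod (p ^ m)), M *ᵥ v = v →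
        M.map (ZMod.castHom (dvd_pow_self p hm) (ZMod p)) *ᵥ
          (ZMod.castHom (dvd_pow_self p hm) (ZMod p) ∘ u) =
          ZMod.castHom (dvd_pow_self p hm) (ZMod p) ∘ u := by
  set π := ZMod.castHom (dvd_pow_self p hm) (ZMod p)
  have hπ (x : ι → ZMod (p ^ m)) : (p : ZMod (p ^ m)) ^ (m - 1) • x = 0 ↔ π ∘ x = 0 := by
    simp only [funext_iff, Pi.smul_apply, smul_eq_mul, Function.comp_apply, Pi.zero_apply,
      ZMod.pow_pred_mul_eq_zero_iff hp hm, π]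
  obtain ⟨j, hw0, hpw⟩ := exists_pow_smul_ne_zero_and_smul_eq_zero (p : ZMod (p ^ m)) hv
    (k := m) (by rw [← Nat.cast_pow, ZMod.natCast_self, zero_smul])
  set w := (p : ZMod (p ^ m)) ^ j • v
  choose u hu using fun i => ZMod.pow_pred_dvd_of_mul_eq_zero hp hm (congrFun hpw i)
  have hwu : w = (p : ZMod (p ^ m)) ^ (m - 1) • u := funext hu
  refine ⟨u, fun h => hw0 (by rwa [hwu, hπ]), fun M hM => ?_⟩
  have hMw : M *ᵥ w = w := by rw [mulVec_smul, hM]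
  rw [hwu, mulVec_smul, ← sub_eq_zero, ← smul_sub, hπ] at hMw
  ext i
  simpa [RingHom.map_mulVec, sub_eq_zero] using congrFun hMw i

theorem orderOf_map_eq_of_coprime_s13 {G G' : Type*} [Monoid G] [Monoid G'] (f : G →* G') {N : ℕ}
    (hker : ∀ u, f u = 1 → u ^ N = 1) {x : G} (hx : (orderOf x).Coprime N) :
    orderOf (f x) = orderOf x := by
  refine (orderOf_map_dvd f x).antisymm (hx.dvd_of_dvd_mul_right (orderOf_dvd_of_pow_eq_one ?_))
  rw [pow_mul]
  exact hker _ (by rw [map_pow, pow_orderOf_eq_one])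

section Singer

variable {ι K : Type*} [Fintype ι] [DecidableEq ι]

theorem Matrix.natCard_adjoin_le [CommRing K] [Nontrivial K] [Finite K] (A : Matrix ι ι K) :
    Nat.card (Algebra.adjoin K {A}) ≤ Nat.card K ^ Fintype.card ι := by
  have : Finite (degreeLT K (Fintype.card ι)) := .of_equiv _ (degreeLTEquiv K _).toEquiv.symm
  have hsurj : Function.Surjective fun q : degreeLT K (Fintype.card ι) =>
      (⟨aeval A (q : K[X]), aeval_mem_adjoin_singleton K A⟩ : Algebra.adjoin K {A}) := by
    rintro ⟨B, hB⟩
    rw [Algebra.adjoin_singleton_eq_range_aeval] at hB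
    obtain ⟨f, rfl⟩ := hB
    refine ⟨⟨f %ₘ A.charpoly, mem_degreeLT.mpr ?_⟩, ?_⟩
    · rw [← A.charpoly_degree_eq_dim]
      exact degree_modByMonic_lt f A.charpoly_monic
    · ext1
      exact aeval_modByMonic_eq_self_of_root A.aeval_self_charpoly
  calc Nat.card (Algebra.adjoin K {A})
      ≤ Nat.card (degreeLT K (Fintype.card ι)) := Nat.card_le_card_of_surjective _ hsurj
    _ = Nat.card (Fin (Fintype.card ι) → K) := Nat.card_congr (degreeLTEquiv K _).toEquiv
    _ = Nat.card K ^ Fintype.card ι := by simp [Nat.card_fun]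

def IsSingerCycle [CommRing K] (A : GL ι K) : Prop :=
  orderOf A = Nat.card K ^ Fintype.card ι - 1

variable [Field K] [Finite K] {A : GL ι K}

theorem IsSingerCycle.ncard_insert_zero_powers [Nonempty ι] (hA : IsSingerCycle A) :
    (insert 0 (Units.val '' (Submonoid.powers A) : Set (Matrix ι ι K))).ncard =
      Nat.card K ^ Fintype.card ι := by
  have hq : 0 < Nat.card K ^ Fintype.card ι := pow_pos Nat.card_pos _
  rw [Set.ncard_insert_of_notMem (by simp [Units.ne_zero]),
    Set.ncard_image_of_injective _ Units.val_injective, ← Nat.card_coe_set_eq,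
    SetLike.coe_sort_coe, Nat.card_submonoidPowers, hA]
  omega

theorem IsSingerCycle.coe_adjoin [Nonempty ι] (hA : IsSingerCycle A) :
    (Algebra.adjoin K {(A : Matrix ι ι K)} : Set (Matrix ι ι K)) =
      insert 0 (Units.val '' (Submonoid.powers A)) := by
  refine (Set.eq_of_subset_of_ncard_le ?_ ?_).symm
  · refine Set.insert_subset (zero_mem _) ?_
    rintro _ ⟨_, ⟨k, rfl⟩, rfl⟩
    exact Units.val_pow_eq_pow_val A k ▸ pow_mem (Algebra.self_mem_adjoin_singleton K _) k
  · rw [hA.ncard_insert_zero_powers, ← Nat.card_coe_set_eq]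
    exact (A : Matrix ι ι K).natCard_adjoin_le

theorem IsSingerCycle.exists_pow_mulVec_eq (hA : IsSingerCycle A) {w y : ι → K} (hw : w ≠ 0)
    (hy : y ≠ 0) : ∃ k : ℕ, ((A ^ k : GL ι K) : Matrix ι ι K) *ᵥ w = y := by
  obtain ⟨i, -⟩ := Function.ne_iff.mp hw
  have : Nonempty ι := ⟨i⟩
  set R := Algebra.adjoin K {(A : Matrix ι ι K)}
  have hR (r : Matrix ι ι K) (hr : r ∈ R) :
      r = 0 ∨ ∃ k : ℕ, r = ((A ^ k : GL ι K) : Matrix ι ι K) := by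
    rw [← SetLike.mem_coe, hA.coe_adjoin] at hr
    rcases hr with rfl | ⟨_, ⟨k, rfl⟩, rfl⟩
    exacts [.inl rfl, .inr ⟨k, rfl⟩]
  have hinj : Function.Injective fun r : R => (r : Matrix ι ι K) *ᵥ w := by
    intro r s hrs
    rcases hR _ (sub_mem r.2 s.2) with h | ⟨k, hk⟩
    · exact Subtype.ext (sub_eq_zero.mp h)
    · refine absurd (mulVec_injective_iff_isUnit.mpr (A ^ k).isUnit ?_) hw
      simp only [← hk, sub_mulVec, hrs, sub_self, mulVec_zero]
  have hcard : Nat.card (ι → K) ≤ Nat.card R := by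
    rw [Nat.card_fun, Nat.card_eq_fintype_card (α := ι), ← hA.ncard_insert_zero_powers,
      ← hA.coe_adjoin]
    exact le_rfl
  obtain ⟨r, rfl⟩ := (hinj.bijective_of_nat_card_le hcard).2 y
  rcases hR r r.2 with h | ⟨k, hk⟩
  · exact absurd (by simp [h]) hy
  · exact ⟨k, by rw [← hk]⟩

theorem IsSingerCycle.eq_bot_of_mem_normalizer (hA : IsSingerCycle A) {N : Subgroup (GL ι K)}
    (hAN : A ∈ Subgroup.normalizer (N : Set (GL ι K))) {w : ι → K} (hw : w ≠ 0)
    (hfix : ∀ x ∈ N, (x : Matrix ι ι K) *ᵥ w = w) : N = ⊥ := by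
  refine (Subgroup.eq_bot_iff_forall N).mpr fun x hx =>
    Units.ext (ext_iff_mulVec.mpr fun y => ?_)
  rw [Units.val_one, one_mulVec]
  rcases eq_or_ne y 0 with rfl | hy
  · exact mulVec_zero _
  obtain ⟨k, rfl⟩ := hA.exists_pow_mulVec_eq hw hy
  have hconj : (A ^ k)⁻¹ * x * A ^ k ∈ N := by
    simpa using (Subgroup.mem_normalizer_iff.mp
      (Subgroup.inv_mem _ (Subgroup.pow_mem _ hAN k)) x).mp hx
  have hcomm : x * A ^ k = A ^ k * ((A ^ k)⁻¹ * x * A ^ k) := by group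
  rw [mulVec_mulVec, ← Units.val_mul, hcomm, Units.val_mul, ← mulVec_mulVec,
    hfix _ hconj]

end Singer

theorem normal_subgroup_no_fixed_points_homocyclic_general (p n m : ℕ)
    (hp : p.Prime) (hm : 1 ≤ m)
    (E : Subgroup (GL (Fin n) (ZMod (p ^ m)))) (hE : ¬ p ∣ Nat.card E)
    (g : GL (Fin n) (ZMod (p ^ m))) (hgE : g ∈ E) (hg : orderOf g = p ^ n - 1)
    (H : Subgroup E) (hHne : H ≠ ⊥) (hHnormal : H.Normal)
    (v : Fin n → ZMod (p ^ m))
    (hfix : ∀ h : E, h ∈ H →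
      ((h : GL (Fin n) (ZMod (p ^ m))) : Matrix (Fin n) (Fin n) (ZMod (p ^ m))).mulVec v = v) :
    v = 0 := by
  by_contra hv
  have := Fact.mk hp
  have hm0 : m ≠ 0 := Nat.one_le_iff_ne_zero.mp hm
  let φ := (GeneralLinearGroup.map (ZMod.castHom (dvd_pow_self p hm0) (ZMod p))).comp E.subtype
  have hker (x : E) (hx : φ x = 1) : x ^ p ^ m = 1 :=
    Subtype.ext (GeneralLinearGroup.pow_eq_one_of_map_castHom_eq_one_s13 hm0 hx)
  have horder (x : E) : orderOf (φ x) = orderOf x :=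
    orderOf_map_eq_of_coprime_s13 φ hker <| Nat.Coprime.pow_right m <|
      (Nat.Coprime.symm <| hp.coprime_iff_not_dvd.mpr hE).coprime_dvd_left (orderOf_dvd_natCard x)
  have hsinger : IsSingerCycle (φ ⟨g, hgE⟩) := by
    rw [IsSingerCycle, horder, Subgroup.orderOf_mk, hg, Nat.card_zmod, Fintype.card_fin]
  have hnormalizer : φ ⟨g, hgE⟩ ∈ Subgroup.normalizer (H.map φ : Set _) :=
    Subgroup.le_normalizer_map φ ⟨_, by simp [Subgroup.normalizer_eq_top_iff.mpr hHnormal], rfl⟩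
  obtain ⟨u, hu0, hufix⟩ := exists_castHom_comp_ne_zero_and_map_mulVec_eq hp.ne_zero hm0 hv
  have hbot : H.map φ = ⊥ := hsinger.eq_bot_of_mem_normalizer hnormalizer hu0 <| by
    rintro _ ⟨x, hx, rfl⟩
    exact hufix _ (hfix x hx)
  refine hHne (eq_bot_iff.mpr fun x hx => ?_)
  rw [Subgroup.mem_bot, ← orderOf_eq_one_iff, ← horder, orderOf_eq_one_iff]
  exact Subgroup.mem_bot.mp (hbot ▸ Subgroup.mem_map_of_mem φ hx)

/-- Let `E` be a `p'`-subgroup of `GL n (ZMod (p ^ m))` containing a Singer cycle, and let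
`H` be a nontrivial normal subgroup of `E`. Then `H` fixes no nonzero element of
`Q = (ZMod (p ^ m)) ^ n`. -/
theorem normal_subgroup_no_fixed_points_homocyclic (p n m : ℕ)
    (hp : p.Prime) (hn : 1 ≤ n) (hm : 1 ≤ m)
    (E : Subgroup (GL (Fin n) (ZMod (p ^ m)))) (hE : ¬ p ∣ Nat.card E)
    (g : GL (Fin n) (ZMod (p ^ m))) (hgE : g ∈ E) (hg : orderOf g = p ^ n - 1)
    (H : Subgroup E) (hHne : H ≠ ⊥) (hHnormal : H.Normal)
    (v : Fin n → ZMod (p ^ m))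
    (hfix : ∀ h : E, h ∈ H →
      ((h : GL (Fin n) (ZMod (p ^ m))) : Matrix (Fin n) (Fin n) (ZMod (p ^ m))).mulVec v = v) :
    v = 0 :=
  normal_subgroup_no_fixed_points_homocyclic_general p n m hp hm E hE g hgE hg H hHne hHnormal v
    hfix
end
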